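/- arXiv:1602.04756 — 2 statements merged into one kernel-verified Lean document; each statement's English description precedes it below -/
import Mathlib

section
/- Let f₀(τ) = Σ_{k=1}^∞ e^{√k/2} τ^k and g(t) = ln( μ_{f₀}(t)/(1−t) ). Then there exists t₀ ∈ (1/2,1) such that for all t ∈ (t₀,1): g(t) < 3·g(2t−1). -/
/-!
Write `L = -log t`. For `k ≥ 1` the `k`-th term of `f₀` at `t` is `exp (√k/2 - k L)`, and
`u/2 - L u² ≤ 1/(16 L)` with near-equality at `k ≈ 1/(16 L²)`, so
`1/(16 L) - 1/2 ≤ log μ_{f₀}(t) ≤ 1/(16 L)`. As `t → 1`, `L ≈ 1 - t`, while for `s = 2t - 1`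
we have `-log s ≈ 2(1 - t)`; hence `g(t) ≈ 1/(16(1-t))` and `3 g(s) ≈ 3/(32(1-t))`, and the
latter wins since the logarithmic terms are of lower order.
-/

open MeasureTheory Set

/-- Maximal term of the power series with coefficients `a`. -/
noncomputable def maxTerm (a : ℕ → ℂ) (r : ℝ) : ℝ :=
  ⨆ n : ℕ, ‖a n‖ * r ^ n

/-- Coefficients of `f₀(τ) = ∑_{k=1}^∞ e^{√k/2} τ^k`. -/
noncomputable def f0Coef : ℕ → ℂ := fun k =>
  if k = 0 then 0 else (Real.exp (Real.sqrt k / 2) : ℂ)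

/-- `g(t) = ln(μ_{f₀}(t)/(1−t))`. -/
noncomputable def gFun (t : ℝ) : ℝ := Real.log (maxTerm f0Coef t / (1 - t))

lemma half_sqrt_sub_mul_le {L x : ℝ} (hL : 0 < L) (hx : 0 ≤ x) :
    √x / 2 - x * L ≤ 1 / (16 * L) := by
  obtain ⟨u, hu, rfl⟩ : ∃ u, 0 ≤ u ∧ x = u ^ 2 :=
    ⟨√x, Real.sqrt_nonneg x, (Real.sq_sqrt hx).symm⟩
  rw [Real.sqrt_sq hu, le_div_iff₀ (by positivity)]
  nlinarith [sq_nonneg (4 * L * u - 1)]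

lemma exists_ne_zero_le_half_sqrt_sub_mul {L : ℝ} (hL : 0 < L) (hL4 : L ≤ 1 / 4) :
    ∃ k : ℕ, k ≠ 0 ∧ 1 / (16 * L) - 1 / 2 ≤ √k / 2 - k * L := by
  set a := 1 / (4 * L) with ha_def
  have haL : a * L = 1 / 4 := by rw [ha_def]; field_simp
  have ha : 1 ≤ a := by rw [le_div_iff₀ (by positivity)]; linarith
  refine ⟨⌊a ^ 2⌋₊, ?_, ?_⟩
  · exact Nat.one_le_iff_ne_zero.1 ((Nat.one_le_floor_iff _).2 (one_le_pow₀ ha))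
  set k := ⌊a ^ 2⌋₊
  have hk_le : (k : ℝ) ≤ a ^ 2 := Nat.floor_le (by positivity)
  have hk_gt : a ^ 2 - 1 < k := by linarith [Nat.lt_floor_add_one (a ^ 2)]
  -- `(a - 1)² ≤ a² - 1 < k` since `a ≥ 1`
  have hsqrt : a - 1 ≤ √k :=
    (Real.le_sqrt (by linarith) (Nat.cast_nonneg _)).2 (by nlinarith)
  have hkL : k * L ≤ a / 4 := by nlinarith
  have h16 : 1 / (16 * L) = a / 4 := by rw [ha_def]; field_simp; ring
  linarith

section maxTerm

variable {a : ℕ → ℂ} {r C : ℝ}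

lemma maxTerm_le (h : ∀ n, ‖a n‖ * r ^ n ≤ C) : maxTerm a r ≤ C :=
  ciSup_le h

lemma le_maxTerm (h : ∀ n, ‖a n‖ * r ^ n ≤ C) (k : ℕ) :
    ‖a k‖ * r ^ k ≤ maxTerm a r :=
  le_ciSup ⟨C, by rintro _ ⟨n, rfl⟩; exact h n⟩ k

end maxTerm

section f0

variable {t : ℝ}

lemma norm_f0Coef_mul_pow {k : ℕ} (hk : k ≠ 0) (ht : 0 < t) :
    ‖f0Coef k‖ * t ^ k = Real.exp (√k / 2 - k * -Real.log t) := by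
  rw [f0Coef, if_neg hk, Complex.norm_real, Real.norm_of_nonneg (Real.exp_pos _).le,
    ← Real.exp_log (pow_pos ht k), Real.log_pow, ← Real.exp_add]
  ring_nf

lemma norm_f0Coef_mul_pow_le (ht0 : 0 < t) (ht1 : t < 1) (n : ℕ) :
    ‖f0Coef n‖ * t ^ n ≤ Real.exp (1 / (16 * -Real.log t)) := by
  rcases eq_or_ne n 0 with rfl | hn
  · simp [f0Coef, (Real.exp_pos _).le]
  rw [norm_f0Coef_mul_pow hn ht0, Real.exp_le_exp]
  exact half_sqrt_sub_mul_le (neg_pos.2 (Real.log_neg ht0 ht1)) (Nat.cast_nonneg n)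

lemma maxTerm_f0Coef_pos (ht0 : 0 < t) (ht1 : t < 1) : 0 < maxTerm f0Coef t := by
  refine lt_of_lt_of_le ?_ (le_maxTerm (norm_f0Coef_mul_pow_le ht0 ht1) 1)
  rw [norm_f0Coef_mul_pow one_ne_zero ht0]
  exact Real.exp_pos _

lemma log_maxTerm_f0Coef_le (ht0 : 0 < t) (ht1 : t < 1) :
    Real.log (maxTerm f0Coef t) ≤ 1 / (16 * -Real.log t) :=
  (Real.log_le_iff_le_exp (maxTerm_f0Coef_pos ht0 ht1)).2
    (maxTerm_le (norm_f0Coef_mul_pow_le ht0 ht1))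

lemma le_log_maxTerm_f0Coef (ht0 : 0 < t) (ht1 : t < 1) (hL : -Real.log t ≤ 1 / 4) :
    1 / (16 * -Real.log t) - 1 / 2 ≤ Real.log (maxTerm f0Coef t) := by
  obtain ⟨k, hk, hle⟩ :=
    exists_ne_zero_le_half_sqrt_sub_mul (neg_pos.2 (Real.log_neg ht0 ht1)) hL
  rw [Real.le_log_iff_exp_le (maxTerm_f0Coef_pos ht0 ht1)]
  calc Real.exp (1 / (16 * -Real.log t) - 1 / 2)
      ≤ ‖f0Coef k‖ * t ^ k := by rw [norm_f0Coef_mul_pow hk ht0]; exact Real.exp_le_exp.2 hle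
    _ ≤ maxTerm f0Coef t := le_maxTerm (norm_f0Coef_mul_pow_le ht0 ht1) k

lemma gFun_eq (ht0 : 0 < t) (ht1 : t < 1) :
    gFun t = Real.log (maxTerm f0Coef t) - Real.log (1 - t) :=
  Real.log_div (maxTerm_f0Coef_pos ht0 ht1).ne' (sub_ne_zero.2 ht1.ne')

lemma gFun_le (ht0 : 0 < t) (ht1 : t < 1) :
    gFun t ≤ 1 / (16 * (1 - t)) - Real.log (1 - t) := by
  have hL : 1 - t ≤ -Real.log t := by linarith [Real.log_le_sub_one_of_pos ht0]
  have hcmp : 1 / (16 * -Real.log t) ≤ 1 / (16 * (1 - t)) :=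
    one_div_le_one_div_of_le (by linarith) (by linarith)
  rw [gFun_eq ht0 ht1]
  linarith [log_maxTerm_f0Coef_le ht0 ht1]

lemma le_gFun (ht : 4 / 5 ≤ t) (ht1 : t < 1) :
    t / (16 * (1 - t)) - 1 / 2 - Real.log (1 - t) ≤ gFun t := by
  have ht0 : 0 < t := by linarith
  have hL : -Real.log t ≤ (1 - t) / t := by
    have : (1 - t) / t = t⁻¹ - 1 := by field_simp
    linarith [Real.one_sub_inv_le_log_of_pos ht0]
  have hL4 : (1 - t) / t ≤ 1 / 4 := by rw [div_le_iff₀ ht0]; linarith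
  have hcmp : t / (16 * (1 - t)) ≤ 1 / (16 * -Real.log t) := by
    rw [show t / (16 * (1 - t)) = 1 / (16 * ((1 - t) / t)) by field_simp]
    exact one_div_le_one_div_of_le (by linarith [Real.log_neg ht0 ht1]) (by linarith)
  rw [gFun_eq ht0 ht1]
  linarith [le_log_maxTerm_f0Coef ht0 ht1 (hL.trans hL4)]

end f0

theorem statement16 :
    ∃ t₀ ∈ Set.Ioo (1/2 : ℝ) 1, ∀ t ∈ Set.Ioo t₀ 1,
      gFun t < 3 * gFun (2 * t - 1) := by
  refine ⟨199 / 200, by norm_num, fun t ⟨hlo, hhi⟩ => ?_⟩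
  set ε := 1 - t
  have hε : 0 < ε := by linarith
  have hupper := gFun_le (by linarith) hhi
  have hlower := le_gFun (t := 2 * t - 1) (by linarith) (by linarith)
  rw [show 1 - (2 * t - 1) = 2 * ε by ring, Real.log_mul two_ne_zero hε.ne'] at hlower
  have hlogε : Real.log ε < 0 := Real.log_neg hε (by linarith)
  have hsplit : 3 * ((2 * t - 1) / (16 * (2 * ε))) - 1 / (16 * ε)
      = (3 * (2 * t - 1) - 2) / (32 * ε) := by field_simp; ring
  have hdominant : 3 / 2 + 3 * Real.log 2 < (3 * (2 * t - 1) - 2) / (32 * ε) := by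
    rw [lt_div_iff₀ (by positivity)]
    nlinarith [Real.log_two_lt_d9]
  linarith
end

section
/- Let p ≥ 2, let f₀(τ) = Σ_{k=1}^∞ e^{√k/2} τ^k, let g(t) = ln( μ_{f₀}(t)/(1−t) ) be increasing on (1/2,1) with inverse g⁻¹, and suppose t* ∈ (1/2,1) is such that for all t ∈ (t*,1): g⁻¹(3g(t)) − g⁻¹(g(t)/3) > 1 − g⁻¹(3g(t)). Define E* = { r ∈ [0,1)^p : r₁ ∈ (t*,1) and r_i ∈ ( g⁻¹(g(r₁)/3), g⁻¹(3 g(r₁)) ) for i = 2,…,p }. Then E* has infinite logarithmic measure: ∫_{E*} Π_{i=1}^p dr_i/(1−r_i) = ∫_{t*}^1 ( ln( (1 − g⁻¹(g(r₁)/3)) / (1 − g⁻¹(3g(r₁))) ) )^{p−1} dr₁/(1−r₁) = +∞; in particular E* ∉ Υ, i.e. ∫_{E* ∩ △_{r₀}} Π dr_i/(1−r_i) = +∞ for every r₀ ∈ [0,1)^p with g⁻¹(g(t*)/3) > max_j (r₀)_j. -/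
open MeasureTheory Set

/-- `E* = {r ∈ [0,1)^p : r₁ ∈ (t*,1), r_i ∈ (g⁻¹(g(r₁)/3), g⁻¹(3g(r₁))) for i ≥ 2}`. -/
def Estar (p : ℕ) [NeZero p] (ginv : ℝ → ℝ) (tstar : ℝ) : Set (Fin p → ℝ) :=
  {r | (∀ j, r j ∈ Set.Ico (0:ℝ) 1) ∧ r 0 ∈ Set.Ioo tstar 1 ∧
    ∀ i, i ≠ 0 → r i ∈ Set.Ioo (ginv (gFun (r 0) / 3)) (ginv (3 * gFun (r 0)))}


/-!
Both sides are `+∞`. Write `β(x) = g⁻¹(3 g(x))`; the hypothesis on `t*` says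
`g⁻¹(g(x)/3) < 2β(x) - 1`, so `E*` contains the shell where `r₁ = x ∈ (T, 1)` and
`1 - rᵢ ∈ (δ, 2δ)` with `δ = 1 - β(x)` for `i ≥ 2`. On that shell the integrand is at least
`(1 - x)⁻¹ (2δ)^{1-p}` and each fibre has volume `δ^{p-1}`, so the logarithmic measure is at
least `2^{1-p} ∫_T^1 dx / (1 - x) = +∞`. The same inequality makes the logarithm on the
right-hand side at least `log 2`. Locating `β(x)` in `(x, 1)` uses that `g` is continuous
(`μ_{f₀}` is a supremum of convex functions), strictly increasing and unbounded near `1`.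
-/

open Filter Topology
open scoped ENNReal

lemma convexOn_ciSup {ι : Type*} [Nonempty ι] {s : Set ℝ} {f : ι → ℝ → ℝ}
    (hf : ∀ i, ConvexOn ℝ s (f i)) (hbdd : ∀ x ∈ s, BddAbove (range fun i => f i x)) :
    ConvexOn ℝ s fun x => ⨆ i, f i x := by
  refine ⟨(hf (Classical.arbitrary ι)).1, fun x hx y hy a b ha hb hab => ciSup_le fun i => ?_⟩
  calc f i (a • x + b • y) ≤ a • f i x + b • f i y := (hf i).2 hx hy ha hb hab
    _ ≤ a • (⨆ i, f i x) + b • ⨆ i, f i y := by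
      gcongr
      exacts [le_ciSup (hbdd x hx) i, le_ciSup (hbdd y hy) i]

lemma norm_f0Coef (n : ℕ) :
    ‖f0Coef n‖ = if n = 0 then 0 else Real.exp (Real.sqrt n / 2) := by
  unfold f0Coef
  split_ifs
  · simp
  · rw [Complex.norm_real, Real.norm_of_nonneg (Real.exp_pos _).le]

lemma exp_sqrt_mul_pow_le {q : ℝ} (h0 : 0 < q) (h1 : q < 1) (n : ℕ) :
    Real.exp (Real.sqrt n / 2) * q ^ n ≤ Real.exp (-(16 * Real.log q)⁻¹) := by
  set l := -Real.log q
  have hl : 0 < l := neg_pos.2 (Real.log_neg h0 h1)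
  have hq : q ^ n = Real.exp (-(n * l)) := by
    rw [neg_mul_eq_mul_neg, neg_neg, Real.exp_nat_mul, Real.exp_log h0]
  rw [hq, ← Real.exp_add, Real.exp_le_exp]
  -- `√n / 2 - n l` is a concave quadratic in `√n`, maximal at `√n = 1 / (4 l)`.
  have hsq : (Real.sqrt n) ^ 2 = n := Real.sq_sqrt n.cast_nonneg
  have key : 0 ≤ l * (Real.sqrt n - (4 * l)⁻¹) ^ 2 := by positivity
  have : -(16 * Real.log q)⁻¹ = (16 * l)⁻¹ := by simp [l]
  rw [this]
  field_simp at key ⊢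
  nlinarith [key, congrArg (· * l ^ 2) hsq]

lemma norm_f0Coef_mul_pow_le_s17 {q : ℝ} (h0 : 0 < q) (h1 : q < 1) (n : ℕ) :
    ‖f0Coef n‖ * q ^ n ≤ Real.exp (-(16 * Real.log q)⁻¹) := by
  rw [norm_f0Coef]
  split_ifs
  · simpa using (Real.exp_pos _).le
  · exact exp_sqrt_mul_pow_le h0 h1 n

lemma bddAbove_range_norm_f0Coef_mul_pow {r : ℝ} (hr : r ∈ Ico (0 : ℝ) 1) :
    BddAbove (range fun n => ‖f0Coef n‖ * r ^ n) := by
  obtain ⟨h0, h1⟩ := hr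
  have hq : 0 < (1 + r) / 2 ∧ (1 + r) / 2 < 1 := ⟨by linarith, by linarith⟩
  refine ⟨_, forall_mem_range.2 fun n => le_trans ?_ (norm_f0Coef_mul_pow_le_s17 hq.1 hq.2 n)⟩
  gcongr
  linarith

lemma le_maxTerm_s17 {r : ℝ} (hr : r ∈ Ico (0 : ℝ) 1) (n : ℕ) :
    ‖f0Coef n‖ * r ^ n ≤ maxTerm f0Coef r :=
  le_ciSup (bddAbove_range_norm_f0Coef_mul_pow hr) n

lemma self_le_maxTerm {r : ℝ} (hr : r ∈ Ico (0 : ℝ) 1) : r ≤ maxTerm f0Coef r := by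
  refine le_trans ?_ (le_maxTerm_s17 hr 1)
  rw [norm_f0Coef, if_neg one_ne_zero, pow_one]
  exact le_mul_of_one_le_left hr.1 (Real.one_le_exp (by positivity))

lemma monotoneOn_maxTerm : MonotoneOn (maxTerm f0Coef) (Ico 0 1) :=
  fun _ hx _ hy hxy =>
    ciSup_mono (bddAbove_range_norm_f0Coef_mul_pow hy) fun n => by gcongr; exact hx.1

lemma convexOn_maxTerm : ConvexOn ℝ (Ico 0 1) (maxTerm f0Coef) :=
  convexOn_ciSup (fun n => ((convexOn_pow n).subset Ico_subset_Ici_self (convex_Ico 0 1)).smul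
    (norm_nonneg (f0Coef n))) fun _ => bddAbove_range_norm_f0Coef_mul_pow

lemma continuousOn_maxTerm : ContinuousOn (maxTerm f0Coef) (Ioo 0 1) :=
  (convexOn_maxTerm.subset Ioo_subset_Ico_self (convex_Ioo 0 1)).continuousOn isOpen_Ioo

lemma gFun_pos {t : ℝ} (ht : t ∈ Ioo (1/2 : ℝ) 1) : 0 < gFun t := by
  obtain ⟨h0, h1⟩ := ht
  refine Real.log_pos ((one_lt_div (by linarith)).2 ?_)
  linarith [self_le_maxTerm (r := t) ⟨by linarith, h1⟩]

lemma strictMonoOn_gFun : StrictMonoOn gFun (Ioo 0 1) := by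
  intro t ht t' ht' hlt
  have hμ : 0 < maxTerm f0Coef t := ht.1.trans_le (self_le_maxTerm (Ioo_subset_Ico_self ht))
  have hμle : maxTerm f0Coef t ≤ maxTerm f0Coef t' :=
    monotoneOn_maxTerm (Ioo_subset_Ico_self ht) (Ioo_subset_Ico_self ht') hlt.le
  refine Real.log_lt_log (div_pos hμ (by linarith [ht.2])) ?_
  calc maxTerm f0Coef t / (1 - t) ≤ maxTerm f0Coef t' / (1 - t) := by
        gcongr
        linarith [ht.2]
    _ < maxTerm f0Coef t' / (1 - t') := by
        gcongr
        · exact hμ.trans_le hμle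
        · linarith [ht'.2]

lemma continuousOn_gFun : ContinuousOn gFun (Ioo 0 1) := by
  refine ContinuousOn.log (continuousOn_maxTerm.div (by fun_prop) fun t ht => ?_) fun t ht => ?_
  · linarith [ht.2]
  · exact (div_pos (ht.1.trans_le (self_le_maxTerm (Ioo_subset_Ico_self ht)))
      (by linarith [ht.2])).ne'

lemma tendsto_gFun_nhdsLT_one : Tendsto gFun (𝓝[<] 1) atTop := by
  have h_one_sub : Tendsto (fun t : ℝ => 1 - t) (𝓝[<] 1) (𝓝[>] 0) := by
    refine tendsto_nhdsWithin_iff.2 ⟨?_, eventually_nhdsWithin_of_forall fun t ht => ?_⟩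
    · exact ((continuous_const.sub continuous_id).tendsto' 1 0 (sub_self 1)).mono_left
        nhdsWithin_le_nhds
    · exact sub_pos.2 (mem_Iio.1 ht)
  have h : Tendsto (fun t : ℝ => Real.log (1 - t)⁻¹ + Real.log (1/2)) (𝓝[<] 1) atTop :=
    tendsto_atTop_add_const_right _ _
      (Real.tendsto_log_atTop.comp (tendsto_inv_nhdsGT_zero.comp h_one_sub))
  refine tendsto_atTop_mono' _ ?_ h
  filter_upwards [Ioo_mem_nhdsLT (show (1/2 : ℝ) < 1 by norm_num)] with t ht
  have h1t : 0 < 1 - t := sub_pos.2 ht.2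
  have hle : 1/2 * (1 - t)⁻¹ ≤ maxTerm f0Coef t / (1 - t) := by
    rw [div_eq_mul_inv]
    refine mul_le_mul_of_nonneg_right ?_ (by positivity)
    linarith [ht.1, self_le_maxTerm (r := t) ⟨by linarith [ht.1], ht.2⟩]
  calc Real.log (1 - t)⁻¹ + Real.log (1/2) = Real.log (1/2 * (1 - t)⁻¹) := by
        rw [Real.log_mul (by norm_num) (by positivity), add_comm]
    _ ≤ gFun t := Real.log_le_log (by positivity) hle

lemma exists_gFun_eq_three_mul {x : ℝ} (hx : x ∈ Ioo (1/2 : ℝ) 1) :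
    ∃ s ∈ Ioo x 1, gFun s = 3 * gFun x := by
  obtain ⟨w, hgw, hw⟩ := ((tendsto_gFun_nhdsLT_one.eventually_gt_atTop (3 * gFun x)).and
    (Ioo_mem_nhdsLT hx.2)).exists
  have hcont : ContinuousOn gFun (Icc x w) :=
    continuousOn_gFun.mono (Icc_subset_Ioo (by linarith [hx.1]) hw.2)
  obtain ⟨s, hs, hgs⟩ := intermediate_value_Ioo hw.1.le hcont
    ⟨by linarith [gFun_pos hx], hgw⟩
  exact ⟨s, ⟨hs.1, hs.2.trans hw.2⟩, hgs⟩

lemma ginv_three_mul_gFun_mem {ginv : ℝ → ℝ}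
    (hinv : ∀ t ∈ Ioo (1/2 : ℝ) 1, ginv (gFun t) = t) {x : ℝ}
    (hx : x ∈ Ioo (1/2 : ℝ) 1) : ginv (3 * gFun x) ∈ Ioo x 1 := by
  obtain ⟨s, hs, hgs⟩ := exists_gFun_eq_three_mul hx
  rwa [← hgs, hinv s ⟨hx.1.trans hs.1, hs.2⟩]

lemma monotoneOn_ginv_three_mul_gFun {ginv : ℝ → ℝ}
    (hinv : ∀ t ∈ Ioo (1/2 : ℝ) 1, ginv (gFun t) = t) :
    MonotoneOn (fun x => ginv (3 * gFun x)) (Ioo (1/2) 1) := by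
  have hsub : Ioo (1/2 : ℝ) 1 ⊆ Ioo 0 1 := Ioo_subset_Ioo_left (by norm_num)
  intro x hx y hy hxy
  obtain ⟨s, hs, hgs⟩ := exists_gFun_eq_three_mul hx
  obtain ⟨s', hs', hgs'⟩ := exists_gFun_eq_three_mul hy
  have hs_mem : s ∈ Ioo (1/2 : ℝ) 1 := ⟨hx.1.trans hs.1, hs.2⟩
  have hs'_mem : s' ∈ Ioo (1/2 : ℝ) 1 := ⟨hy.1.trans hs'.1, hs'.2⟩
  simp only [← hgs, ← hgs', hinv s hs_mem, hinv s' hs'_mem]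
  refine (strictMonoOn_gFun.le_iff_le (hsub hs_mem) (hsub hs'_mem)).1 ?_
  rw [hgs, hgs']
  gcongr
  exact strictMonoOn_gFun.monotoneOn (hsub hx) (hsub hy) hxy

lemma lintegral_Ioo_mul_inv_one_sub_eq_top {T c : ℝ} (hT : T < 1) (hc : 0 < c) :
    ∫⁻ x in Ioo T 1, ENNReal.ofReal (c * (1 - x)⁻¹) = ⊤ := by
  by_contra h
  have hint : IntegrableOn (fun x => c * (1 - x)⁻¹) (Ioo T 1) := by
    refine (lintegral_ofReal_ne_top_iff_integrable (by fun_prop) ?_).1 h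
    filter_upwards [self_mem_ae_restrict measurableSet_Ioo] with x hx
    have : 0 < 1 - x := sub_pos.2 hx.2
    positivity
  have hsub : IntegrableOn (fun x => (x - 1)⁻¹) (Ioo T 1) := by
    refine IntegrableOn.congr_fun (hint.const_mul (-c⁻¹)) (fun x _ => ?_) measurableSet_Ioo
    rw [← neg_sub 1 x, inv_neg]
    field_simp
  rw [← intervalIntegrable_iff_integrableOn_Ioo_of_le hT.le,
    intervalIntegrable_sub_inv_iff] at hsub
  simp [hT.ne, uIcc_of_le hT.le] at hsub
  linarith

lemma setLIntegral_apply_zero_eq_mul_volume {n : ℕ} {S : Set ℝ}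
    {B : ℝ → Set (Fin n → ℝ)} (hS : MeasurableSet S) (hB : ∀ x, MeasurableSet (B x))
    (hW : MeasurableSet {r : Fin (n + 1) → ℝ | r 0 ∈ S ∧ Fin.tail r ∈ B (r 0)})
    {G : ℝ → ℝ≥0∞} (hG : Measurable G) :
    ∫⁻ r in {r : Fin (n + 1) → ℝ | r 0 ∈ S ∧ Fin.tail r ∈ B (r 0)}, G (r 0) =
      ∫⁻ x in S, G x * volume (B x) := by
  set W := {r : Fin (n + 1) → ℝ | r 0 ∈ S ∧ Fin.tail r ∈ B (r 0)}
  have e := (volume_preserving_piFinSuccAbove (fun _ : Fin (n + 1) => ℝ) 0).symm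
  have he : ∀ z : ℝ × (Fin n → ℝ),
      (MeasurableEquiv.piFinSuccAbove (fun _ : Fin (n + 1) => ℝ) 0).symm z = Fin.cons z.1 z.2 :=
    fun z => Fin.insertNth_zero' z.1 z.2
  have hfiber : ∀ x y, W.indicator (fun r => G (r 0)) (Fin.cons x y) =
      S.indicator (fun x => (B x).indicator (fun _ => G x) y) x := by
    intro x y
    by_cases hx : x ∈ S <;> by_cases hy : y ∈ B x <;> simp [W, hx, hy]
  rw [← lintegral_indicator hW, ← e.lintegral_comp_emb (MeasurableEquiv.measurableEmbedding _),
    Measure.volume_eq_prod, lintegral_prod _ ?_, ← lintegral_indicator hS]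
  · refine lintegral_congr fun x => ?_
    simp only [he, hfiber]
    by_cases hx : x ∈ S
    · simp [hx, lintegral_indicator_const (hB x)]
    · simp [hx]
  · exact (((hG.comp (measurable_pi_apply 0)).indicator hW).comp
      (MeasurableEquiv.measurable _)).aemeasurable

def dyadicShell (n : ℕ) (T : ℝ) (β : ℝ → ℝ) : Set (Fin (n + 1) → ℝ) :=
  {r | r 0 ∈ Ioo T 1 ∧ Fin.tail r ∈ univ.pi fun _ => Ioo (2 * β (r 0) - 1) (β (r 0))}

section Shell

variable {n : ℕ} {T : ℝ} {β : ℝ → ℝ}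

lemma measurableSet_dyadicShell (hβ : Measurable β) : MeasurableSet (dyadicShell n T β) := by
  have h0 : Measurable fun r : Fin (n + 1) → ℝ => r 0 := measurable_pi_apply 0
  simp only [dyadicShell, mem_univ_pi, Fin.tail, mem_Ioo, ofPred_and, ofPred_forall]
  exact ((measurableSet_lt measurable_const h0).inter (measurableSet_lt h0 measurable_const)).inter
    (.iInter fun i => (measurableSet_lt (by fun_prop) (measurable_pi_apply _)).inter
      (measurableSet_lt (measurable_pi_apply _) (hβ.comp h0)))

lemma lintegral_dyadicShell_eq_top (hT : T < 1) (hβ : Measurable β)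
    (hβ1 : ∀ x ∈ Ioo T 1, β x < 1) :
    ∫⁻ r in dyadicShell n T β, ENNReal.ofReal (∏ i, (1 - r i)⁻¹) = ⊤ := by
  set G : ℝ → ℝ≥0∞ := fun x => ENNReal.ofReal ((1 - x)⁻¹ * ((2 * (1 - β x))⁻¹) ^ n)
  have hbox : EqOn (fun x => G x * volume (univ.pi fun _ : Fin n => Ioo (2 * β x - 1) (β x)))
      (fun x => ENNReal.ofReal ((2 ^ n)⁻¹ * (1 - x)⁻¹)) (Ioo T 1) := by
    intro x hx
    have h1 : 0 < 1 - β x := sub_pos.2 (hβ1 x hx)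
    have h2 : 0 < 1 - x := sub_pos.2 hx.2
    simp only [G, Real.volume_pi_Ioo, Finset.prod_const, Finset.card_univ, Fintype.card_fin]
    rw [show β x - (2 * β x - 1) = 1 - β x by ring, ← ENNReal.ofReal_pow h1.le,
      ← ENNReal.ofReal_mul (by positivity)]
    congr 1
    rw [mul_inv, mul_pow, inv_pow, mul_assoc, mul_assoc, ← mul_pow, inv_mul_cancel₀ h1.ne',
      one_pow, mul_one, mul_comm]
  have hle : ∀ r ∈ dyadicShell n T β, G (r 0) ≤ ENNReal.ofReal (∏ i, (1 - r i)⁻¹) := by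
    rintro r ⟨hr0, hr⟩
    have h1 : 0 < 1 - β (r 0) := sub_pos.2 (hβ1 _ hr0)
    refine ENNReal.ofReal_le_ofReal ?_
    rw [Fin.prod_univ_succ]
    gcongr
    · exact inv_nonneg.2 (sub_nonneg.2 hr0.2.le)
    rw [← Fin.prod_const]
    refine Finset.prod_le_prod (fun _ _ => by positivity) fun i _ => ?_
    obtain ⟨hlo, hhi⟩ : r i.succ ∈ Ioo (2 * β (r 0) - 1) (β (r 0)) := hr i (mem_univ i)
    exact inv_anti₀ (by linarith) (by linarith)
  refine top_unique ?_
  calc ⊤ = ∫⁻ x in Ioo T 1, ENNReal.ofReal ((2 ^ n)⁻¹ * (1 - x)⁻¹) :=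
        (lintegral_Ioo_mul_inv_one_sub_eq_top hT (by positivity)).symm
    _ = ∫⁻ x in Ioo T 1, G x * volume (univ.pi fun _ : Fin n => Ioo (2 * β x - 1) (β x)) :=
        (setLIntegral_congr_fun measurableSet_Ioo hbox).symm
    _ = ∫⁻ r in dyadicShell n T β, G (r 0) :=
        (setLIntegral_apply_zero_eq_mul_volume
          (B := fun x => univ.pi fun _ => Ioo (2 * β x - 1) (β x)) measurableSet_Ioo
          (fun _ => .univ_pi fun _ => measurableSet_Ioo) (measurableSet_dyadicShell hβ)
          (by fun_prop)).symm
    _ ≤ _ := setLIntegral_mono (by fun_prop) hle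

end Shell

lemma dyadicShell_subset_Estar {n : ℕ} {ginv : ℝ → ℝ} {tstar T : ℝ} {β : ℝ → ℝ}
    (hinv : ∀ t ∈ Ioo (1/2 : ℝ) 1, ginv (gFun t) = t)
    (hkey : ∀ t ∈ Ioo tstar 1, ginv (3 * gFun t) - ginv (gFun t / 3) > 1 - ginv (3 * gFun t))
    (hts : 1/2 < tstar) (hT : tstar ≤ T)
    (hβ : EqOn (fun x => ginv (3 * gFun x)) β (Ioo (1/2) 1)) :
    dyadicShell n T β ⊆ Estar (n + 1) ginv tstar ∩ {s | ∀ j, 2 * T - 1 ≤ s j} := by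
  rintro r ⟨hr0, hr⟩
  have hr0_ts : r 0 ∈ Ioo tstar 1 := ⟨hT.trans_lt hr0.1, hr0.2⟩
  have hr0_half : r 0 ∈ Ioo (1/2 : ℝ) 1 := ⟨hts.trans hr0_ts.1, hr0.2⟩
  have hβr0 : ginv (3 * gFun (r 0)) = β (r 0) := hβ hr0_half
  obtain ⟨hβlo, hβhi⟩ : β (r 0) ∈ Ioo (r 0) 1 :=
    hβr0 ▸ ginv_three_mul_gFun_mem hinv hr0_half
  have hA := hkey (r 0) hr0_ts
  rw [hβr0] at hA
  have hne : ∀ j ≠ 0, r j ∈ Ioo (2 * β (r 0) - 1) (β (r 0)) := fun j hj => by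
    obtain ⟨i, rfl⟩ := Fin.exists_succ_eq.2 hj
    exact hr i (mem_univ i)
  refine ⟨⟨fun j => ?_, hr0_ts, fun i hi => ?_⟩, fun j => ?_⟩
  · rcases eq_or_ne j 0 with rfl | hj
    · exact ⟨by linarith [hr0_half.1], hr0.2⟩
    · exact ⟨by linarith [(hne j hj).1, hr0_half.1], by linarith [(hne j hj).2]⟩
  · rw [hβr0]
    exact ⟨by linarith [(hne i hi).1], (hne i hi).2⟩
  · rcases eq_or_ne j 0 with rfl | hj
    · linarith [hr0.1, hr0.2]
    · linarith [(hne j hj).1, hr0.1]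

lemma lintegral_Estar_inter_eq_top {n : ℕ} {ginv : ℝ → ℝ} {tstar m : ℝ}
    (hts : tstar ∈ Ioo (1/2 : ℝ) 1) (hinv : ∀ t ∈ Ioo (1/2 : ℝ) 1, ginv (gFun t) = t)
    (hkey : ∀ t ∈ Ioo tstar 1, ginv (3 * gFun t) - ginv (gFun t / 3) > 1 - ginv (3 * gFun t))
    (hm : m < 1) :
    ∫⁻ r in Estar (n + 1) ginv tstar ∩ {s | ∀ j, m ≤ s j},
      ENNReal.ofReal (∏ i, (1 - r i)⁻¹) = ⊤ := by
  have hmaps : MapsTo (fun x => ginv (3 * gFun x)) (Ioo (1/2) 1) (Ioo (1/2) 1) := fun x hx =>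
    ⟨hx.1.trans (ginv_three_mul_gFun_mem hinv hx).1, (ginv_three_mul_gFun_mem hinv hx).2⟩
  -- `ginv` need not be measurable: a monotone extension gives a measurable edge for the shell
  obtain ⟨β, hβ_mono, hβ⟩ := (monotoneOn_ginv_three_mul_gFun hinv).exists_monotone_extension
    ⟨1/2, forall_mem_image.2 fun _ hx => (hmaps hx).1.le⟩
    ⟨1, forall_mem_image.2 fun _ hx => (hmaps hx).2.le⟩
  set T := max tstar ((1 + m) / 2)
  have hT1 : T < 1 := max_lt hts.2 (by linarith)
  have hβ1 : ∀ x ∈ Ioo T 1, β x < 1 := fun x hx => by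
    have hx' : x ∈ Ioo (1/2 : ℝ) 1 :=
      ⟨hts.1.trans_le ((le_max_left _ _).trans hx.1.le), hx.2⟩
    exact hβ hx' ▸ (hmaps hx').2
  have hmT : m ≤ 2 * T - 1 := by linarith [le_max_right tstar ((1 + m) / 2)]
  refine top_unique ((lintegral_dyadicShell_eq_top (n := n) hT1 hβ_mono.measurable
    hβ1).symm.le.trans (lintegral_mono_set ?_))
  exact (dyadicShell_subset_Estar hinv hkey hts.1 (le_max_left _ _) hβ).trans
    (inter_subset_inter_right _ fun s hs j => hmT.trans (hs j))

lemma lintegral_log_ratio_eq_top {ginv : ℝ → ℝ} {tstar : ℝ} (k : ℕ)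
    (hts : tstar ∈ Ioo (1/2 : ℝ) 1) (hinv : ∀ t ∈ Ioo (1/2 : ℝ) 1, ginv (gFun t) = t)
    (hkey : ∀ t ∈ Ioo tstar 1, ginv (3 * gFun t) - ginv (gFun t / 3) > 1 - ginv (3 * gFun t)) :
    ∫⁻ x in Ioo tstar 1, ENNReal.ofReal
      (Real.log ((1 - ginv (gFun x / 3)) / (1 - ginv (3 * gFun x))) ^ k * (1 - x)⁻¹) = ⊤ := by
  refine top_unique ((lintegral_Ioo_mul_inv_one_sub_eq_top hts.2
    (pow_pos (Real.log_pos one_lt_two) k)).symm.le.trans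
    (setLIntegral_mono' measurableSet_Ioo fun x hx => ENNReal.ofReal_le_ofReal ?_))
  have hB := ginv_three_mul_gFun_mem hinv ⟨hts.1.trans hx.1, hx.2⟩
  have hk := hkey x hx
  gcongr
  · exact inv_nonneg.2 (sub_nonneg.2 hx.2.le)
  · rw [le_div_iff₀ (by linarith [hB.2])]
    linarith

theorem statement17_general (p : ℕ) [NeZero p] (ginv : ℝ → ℝ) (tstar : ℝ)
    (hts : tstar ∈ Set.Ioo (1/2 : ℝ) 1)
    (hinv : ∀ t ∈ Set.Ioo (1/2 : ℝ) 1, ginv (gFun t) = t)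
    (hkey : ∀ t ∈ Set.Ioo tstar 1,
      ginv (3 * gFun t) - ginv (gFun t / 3) > 1 - ginv (3 * gFun t)) :
    (∫⁻ r in Estar p ginv tstar, ENNReal.ofReal (∏ i, (1 - r i)⁻¹)) =
      (∫⁻ r₁ in Set.Ioo tstar 1, ENNReal.ofReal
        (Real.log ((1 - ginv (gFun r₁ / 3)) / (1 - ginv (3 * gFun r₁))) ^ (p - 1) *
          (1 - r₁)⁻¹)) ∧
    (∫⁻ r in Estar p ginv tstar, ENNReal.ofReal (∏ i, (1 - r i)⁻¹)) = ⊤ ∧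
    ∀ r₀ : Fin p → ℝ, (∀ j, r₀ j ∈ Set.Ico (0:ℝ) 1) →
      (∀ j, r₀ j < ginv (gFun tstar / 3)) →
      ∫⁻ r in Estar p ginv tstar ∩ {s | ∀ j, r₀ j ≤ s j},
        ENNReal.ofReal (∏ i, (1 - r i)⁻¹) = ⊤ := by
  obtain ⟨n, rfl⟩ : ∃ n, p = n + 1 := Nat.exists_eq_succ_of_ne_zero (NeZero.ne p)
  have hLHS := top_unique ((lintegral_Estar_inter_eq_top (n := n) (m := 0) hts hinv hkey
    one_pos).symm.le.trans (lintegral_mono_set inter_subset_left))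
  refine ⟨hLHS.trans (lintegral_log_ratio_eq_top _ hts hinv hkey).symm, hLHS,
    fun r₀ hr₀ _ => ?_⟩
  obtain ⟨m, hm1, hm⟩ : ∃ m < 1, ∀ j, r₀ j ≤ m :=
    ⟨Finset.univ.sup' Finset.univ_nonempty r₀, (Finset.sup'_lt_iff _).2 fun j _ => (hr₀ j).2,
      fun j => Finset.le_sup' r₀ (Finset.mem_univ j)⟩
  exact top_unique ((lintegral_Estar_inter_eq_top hts hinv hkey hm1).symm.le.trans
    (lintegral_mono_set (inter_subset_inter_right _ fun s hs j => (hm j).trans (hs j))))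

theorem statement17 (p : ℕ) [NeZero p] (hp : 2 ≤ p) (ginv : ℝ → ℝ) (tstar : ℝ)
    (hts : tstar ∈ Set.Ioo (1/2 : ℝ) 1)
    (hmem : ∀ y, 0 < y → ginv y ∈ Set.Ioo (1/2 : ℝ) 1)
    (hinv : ∀ t ∈ Set.Ioo (1/2 : ℝ) 1, ginv (gFun t) = t)
    (hkey : ∀ t ∈ Set.Ioo tstar 1,
      ginv (3 * gFun t) - ginv (gFun t / 3) > 1 - ginv (3 * gFun t)) :
    (∫⁻ r in Estar p ginv tstar, ENNReal.ofReal (∏ i, (1 - r i)⁻¹)) =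
      (∫⁻ r₁ in Set.Ioo tstar 1, ENNReal.ofReal
        (Real.log ((1 - ginv (gFun r₁ / 3)) / (1 - ginv (3 * gFun r₁))) ^ (p - 1) *
          (1 - r₁)⁻¹)) ∧
    (∫⁻ r in Estar p ginv tstar, ENNReal.ofReal (∏ i, (1 - r i)⁻¹)) = ⊤ ∧
    ∀ r₀ : Fin p → ℝ, (∀ j, r₀ j ∈ Set.Ico (0:ℝ) 1) →
      (∀ j, r₀ j < ginv (gFun tstar / 3)) →
      ∫⁻ r in Estar p ginv tstar ∩ {s | ∀ j, r₀ j ≤ s j},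
        ENNReal.ofReal (∏ i, (1 - r i)⁻¹) = ⊤ :=
  statement17_general p ginv tstar hts hinv hkey
end
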